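/- Let σ > 0 and let g be a Borel probability measure on ℝ, and set f(x) := ∫ φ_σ(x − θ) dg(θ) and m(x) := f(x)^{−1} ∫ θ φ_σ(x − θ) dg(θ). Then f is strictly positive and twice differentiable, log f is twice differentiable, and the second-order Tweedie formula holds: for every x ∈ ℝ, f(x)^{−1} ∫ θ² φ_σ(x − θ) dg(θ) − m(x)² = σ² + σ⁴ (d²/dx²)(log f)(x); that is, the posterior variance of θ given x equals σ² + σ⁴ (log f)''(x). -/

import Mathlib

open MeasureTheory Real

/-- The one-dimensional Gaussian density `φ_σ(u) = (2πσ²)^{-1/2} exp(-u²/(2σ²))`. -/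
noncomputable def gaussDens1 (σ : ℝ) (u : ℝ) : ℝ :=
  (2 * π * σ ^ 2) ^ (-(1 : ℝ) / 2) * Real.exp (-u ^ 2 / (2 * σ ^ 2))

noncomputable def gd1 (σ u : ℝ) : ℝ := -(u / σ ^ 2) * gaussDens1 σ u

noncomputable def gd2 (σ u : ℝ) : ℝ := (u ^ 2 / σ ^ 4 - 1 / σ ^ 2) * gaussDens1 σ u

section Aux

variable {σ : ℝ}

lemma base_pos (hσ : 0 < σ) : 0 < 2 * π * σ ^ 2 := by
  have := Real.pi_pos; positivity

lemma gd_pos (hσ : 0 < σ) (u : ℝ) : 0 < gaussDens1 σ u :=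
  mul_pos (Real.rpow_pos_of_pos (base_pos hσ) _) (Real.exp_pos _)

lemma gd_le (hσ : 0 < σ) (u : ℝ) :
    gaussDens1 σ u ≤ (2 * π * σ ^ 2) ^ (-(1 : ℝ) / 2) := by
  have h1 : Real.exp (-u ^ 2 / (2 * σ ^ 2)) ≤ 1 := by
    rw [Real.exp_le_one_iff]
    have : (0:ℝ) ≤ u ^ 2 / (2 * σ ^ 2) := by positivity
    rw [neg_div]; linarith
  have := (Real.rpow_pos_of_pos (base_pos hσ) (-(1 : ℝ) / 2)).le
  calc gaussDens1 σ u ≤ (2 * π * σ ^ 2) ^ (-(1 : ℝ) / 2) * 1 := by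
        exact mul_le_mul_of_nonneg_left h1 this
    _ = _ := mul_one _

lemma sq_exp_le (hσ : 0 < σ) (u : ℝ) :
    u ^ 2 * Real.exp (-u ^ 2 / (2 * σ ^ 2)) ≤ 2 * σ ^ 2 := by
  set t : ℝ := u ^ 2 / (2 * σ ^ 2) with ht
  have ht0 : 0 ≤ t := by positivity
  have h1 : t ≤ Real.exp t := by linarith [Real.add_one_le_exp t]
  have hu : u ^ 2 = 2 * σ ^ 2 * t := by rw [ht]; field_simp
  have hxt : -u ^ 2 / (2 * σ ^ 2) = -t := by rw [neg_div]
  rw [hxt, Real.exp_neg]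
  rw [hu]
  have hE := Real.exp_pos t
  calc 2 * σ ^ 2 * t * (Real.exp t)⁻¹ ≤ 2 * σ ^ 2 * Real.exp t * (Real.exp t)⁻¹ := by
        have h2 : (0:ℝ) < 2 * σ ^ 2 := by positivity
        have := mul_le_mul_of_nonneg_left h1 h2.le
        exact mul_le_mul_of_nonneg_right this (inv_pos.mpr hE).le
    _ = 2 * σ ^ 2 := by field_simp

lemma sq_gd_le (hσ : 0 < σ) (u : ℝ) :
    u ^ 2 * gaussDens1 σ u ≤ (2 * π * σ ^ 2) ^ (-(1 : ℝ) / 2) * (2 * σ ^ 2) := by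
  unfold gaussDens1
  have h := sq_exp_le hσ u
  have hC := (Real.rpow_pos_of_pos (base_pos hσ) (-(1 : ℝ) / 2)).le
  calc u ^ 2 * ((2 * π * σ ^ 2) ^ (-(1 : ℝ) / 2) * Real.exp (-u ^ 2 / (2 * σ ^ 2)))
      = (2 * π * σ ^ 2) ^ (-(1 : ℝ) / 2) * (u ^ 2 * Real.exp (-u ^ 2 / (2 * σ ^ 2))) := by ring
    _ ≤ _ := mul_le_mul_of_nonneg_left h hC

lemma abs_gd_le (hσ : 0 < σ) (u : ℝ) :
    |u| * gaussDens1 σ u ≤ (2 * π * σ ^ 2) ^ (-(1 : ℝ) / 2) * (1 + 2 * σ ^ 2) := by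
  have h0 : |u| ≤ 1 + u ^ 2 := by nlinarith [abs_nonneg u, sq_abs u]
  have hpos := (gd_pos hσ u).le
  calc |u| * gaussDens1 σ u ≤ (1 + u ^ 2) * gaussDens1 σ u :=
        mul_le_mul_of_nonneg_right h0 hpos
    _ = gaussDens1 σ u + u ^ 2 * gaussDens1 σ u := by ring
    _ ≤ (2 * π * σ ^ 2) ^ (-(1 : ℝ) / 2) + (2 * π * σ ^ 2) ^ (-(1 : ℝ) / 2) * (2 * σ ^ 2) :=
        add_le_add (gd_le hσ u) (sq_gd_le hσ u)
    _ = _ := by ring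

lemma gd_continuous (σ : ℝ) : Continuous (gaussDens1 σ) := by
  unfold gaussDens1
  exact continuous_const.mul (Real.continuous_exp.comp (by continuity))

lemma gd1_continuous (σ : ℝ) : Continuous (gd1 σ) := by
  unfold gd1
  exact (continuous_id.div_const _).neg.mul (gd_continuous σ)

lemma gd2_continuous (σ : ℝ) : Continuous (gd2 σ) := by
  unfold gd2
  exact (((continuous_pow 2).div_const _).sub continuous_const).mul (gd_continuous σ)

lemma hasDerivAt_gd (hσ : 0 < σ) (u : ℝ) :
    HasDerivAt (gaussDens1 σ) (gd1 σ u) u := by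
  have h1 : HasDerivAt (fun u : ℝ => -u ^ 2 / (2 * σ ^ 2)) (-(u / σ ^ 2)) u := by
    have h := ((hasDerivAt_pow 2 u).neg).div_const (2 * σ ^ 2)
    refine h.congr_deriv ?_
    have : σ ^ 2 ≠ 0 := by positivity
    field_simp
    ring
  have h2 := (h1.exp).const_mul ((2 * π * σ ^ 2) ^ (-(1 : ℝ) / 2))
  refine h2.congr_deriv ?_
  unfold gd1 gaussDens1
  ring

lemma hasDerivAt_gd1 (hσ : 0 < σ) (u : ℝ) :
    HasDerivAt (gd1 σ) (gd2 σ u) u := by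
  have ha : HasDerivAt (fun u : ℝ => -(u / σ ^ 2)) (-(1 / σ ^ 2)) u := by
    have := (hasDerivAt_id u).div_const (σ ^ 2)
    exact this.neg
  have h := ha.mul (hasDerivAt_gd hσ u)
  refine h.congr_deriv ?_
  unfold gd2 gd1 gaussDens1
  ring

lemma gd1_bound (hσ : 0 < σ) (u : ℝ) :
    ‖gd1 σ u‖ ≤ (2 * π * σ ^ 2) ^ (-(1 : ℝ) / 2) * (1 + 2 * σ ^ 2) / σ ^ 2 := by
  unfold gd1
  have hpos := (gd_pos hσ u).le
  have hσ2 : (0:ℝ) < σ ^ 2 := by positivity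
  rw [Real.norm_eq_abs, abs_mul, abs_of_nonneg hpos, abs_neg, abs_div, abs_of_nonneg hσ2.le]
  rw [div_mul_eq_mul_div, div_le_div_iff_of_pos_right hσ2]
  exact abs_gd_le hσ u

lemma gd2_bound (hσ : 0 < σ) (u : ℝ) :
    ‖gd2 σ u‖ ≤ 3 * (2 * π * σ ^ 2) ^ (-(1 : ℝ) / 2) / σ ^ 2 := by
  unfold gd2
  have hpos := (gd_pos hσ u).le
  have hσ2 : (0:ℝ) < σ ^ 2 := by positivity
  have hσ4 : (0:ℝ) < σ ^ 4 := by positivity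
  rw [Real.norm_eq_abs, abs_mul, abs_of_nonneg hpos]
  have h1 : |u ^ 2 / σ ^ 4 - 1 / σ ^ 2| ≤ u ^ 2 / σ ^ 4 + 1 / σ ^ 2 := by
    have := abs_sub (u ^ 2 / σ ^ 4) (1 / σ ^ 2)
    rw [abs_of_nonneg (by positivity : (0:ℝ) ≤ u ^ 2 / σ ^ 4),
      abs_of_nonneg (by positivity : (0:ℝ) ≤ 1 / σ ^ 2)] at this
    exact this
  have hsq := sq_gd_le hσ u
  have hg := gd_le hσ u
  have h4 : σ ^ 4 = σ ^ 2 * σ ^ 2 := by ring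
  calc |u ^ 2 / σ ^ 4 - 1 / σ ^ 2| * gaussDens1 σ u
      ≤ (u ^ 2 / σ ^ 4 + 1 / σ ^ 2) * gaussDens1 σ u := mul_le_mul_of_nonneg_right h1 hpos
    _ = (u ^ 2 * gaussDens1 σ u) / σ ^ 4 + gaussDens1 σ u / σ ^ 2 := by ring
    _ ≤ ((2 * π * σ ^ 2) ^ (-(1 : ℝ) / 2) * (2 * σ ^ 2)) / σ ^ 4
        + (2 * π * σ ^ 2) ^ (-(1 : ℝ) / 2) / σ ^ 2 :=
        by gcongr
    _ = 3 * (2 * π * σ ^ 2) ^ (-(1 : ℝ) / 2) / σ ^ 2 := by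
        field_simp
        ring

lemma integrable_of_bdd {h : ℝ → ℝ} (hc : Continuous h) {B : ℝ} (hb : ∀ θ, ‖h θ‖ ≤ B)
    (g : Measure ℝ) [IsProbabilityMeasure g] : Integrable h g :=
  (integrable_const B).mono' hc.aestronglyMeasurable (ae_of_all _ hb)

end Aux

/-- Second-order Tweedie formula in the one-dimensional normal means model
`θ ~ g`, `x = θ + ε`, `ε ~ N(0, σ²)`. With marginal density
`f(x) = ∫ φ_σ(x − θ) dg(θ)` and posterior mean
`m(x) = f(x)⁻¹ ∫ θ φ_σ(x − θ) dg(θ)`: `f` is strictly positive and twice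
differentiable, `log f` is twice differentiable, and the posterior variance satisfies
`f(x)⁻¹ ∫ θ² φ_σ(x − θ) dg(θ) − m(x)² = σ² + σ⁴ (log f)''(x)`. -/
theorem second_order_tweedie
    (σ : ℝ) (hσ : 0 < σ)
    (g : Measure ℝ) [IsProbabilityMeasure g]
    (f : ℝ → ℝ) (hf : ∀ x, f x = ∫ θ, gaussDens1 σ (x - θ) ∂g)
    (m : ℝ → ℝ) (hm : ∀ x, m x = (f x)⁻¹ * ∫ θ, θ * gaussDens1 σ (x - θ) ∂g) :
    (∀ x, 0 < f x) ∧
    Differentiable ℝ f ∧ Differentiable ℝ (deriv f) ∧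
    Differentiable ℝ (fun x => Real.log (f x)) ∧
    Differentiable ℝ (deriv fun x => Real.log (f x)) ∧
    (∀ x, (f x)⁻¹ * (∫ θ, θ ^ 2 * gaussDens1 σ (x - θ) ∂g) - (m x) ^ 2
        = σ ^ 2 + σ ^ 4 * deriv (deriv fun x => Real.log (f x)) x) := by
  set C : ℝ := (2 * π * σ ^ 2) ^ (-(1 : ℝ) / 2) with hC
  have hσ2 : (0:ℝ) < σ ^ 2 := by positivity
  -- Integrability of the basic integrands, for any fixed x
  have cont0 : ∀ x : ℝ, Continuous (fun θ : ℝ => gaussDens1 σ (x - θ)) := fun x =>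
    (gd_continuous σ).comp (continuous_const.sub continuous_id)
  have int0 : ∀ x : ℝ, Integrable (fun θ => gaussDens1 σ (x - θ)) g := fun x =>
    integrable_of_bdd (cont0 x)
      (fun θ => by
        rw [Real.norm_eq_abs, abs_of_nonneg (gd_pos hσ _).le]; exact gd_le hσ _) g
  have int1 : ∀ x : ℝ, Integrable (fun θ => θ * gaussDens1 σ (x - θ)) g := by
    intro x
    refine integrable_of_bdd (h := fun θ => θ * gaussDens1 σ (x - θ))
      (continuous_id.mul (cont0 x))
      (B := |x| * C + C * (1 + 2 * σ ^ 2)) (fun θ => ?_) g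
    have hpos := (gd_pos hσ (x - θ)).le
    rw [Real.norm_eq_abs, abs_mul, abs_of_nonneg hpos]
    have h1 : |θ| ≤ |x| + |x - θ| := by
      have h2 := abs_add_le x (θ - x)
      rw [add_sub_cancel] at h2
      rw [abs_sub_comm θ x] at *
      linarith [h2, abs_sub_comm x θ]
    calc |θ| * gaussDens1 σ (x - θ) ≤ (|x| + |x - θ|) * gaussDens1 σ (x - θ) :=
          mul_le_mul_of_nonneg_right h1 hpos
      _ = |x| * gaussDens1 σ (x - θ) + |x - θ| * gaussDens1 σ (x - θ) := by ring
      _ ≤ |x| * C + C * (1 + 2 * σ ^ 2) :=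
          add_le_add (mul_le_mul_of_nonneg_left (gd_le hσ _) (abs_nonneg x)) (abs_gd_le hσ _)
  have int2 : ∀ x : ℝ, Integrable (fun θ => θ ^ 2 * gaussDens1 σ (x - θ)) g := by
    intro x
    refine integrable_of_bdd (h := fun θ => θ ^ 2 * gaussDens1 σ (x - θ))
      ((continuous_pow 2).mul (cont0 x))
      (B := 2 * x ^ 2 * C + 2 * (C * (2 * σ ^ 2))) (fun θ => ?_) g
    have hpos := (gd_pos hσ (x - θ)).le
    rw [Real.norm_eq_abs, abs_mul, abs_of_nonneg (sq_nonneg θ), abs_of_nonneg hpos]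
    have h1 : θ ^ 2 ≤ 2 * x ^ 2 + 2 * (x - θ) ^ 2 := by nlinarith [sq_nonneg (x - θ + x)]
    calc θ ^ 2 * gaussDens1 σ (x - θ) ≤ (2 * x ^ 2 + 2 * (x - θ) ^ 2) * gaussDens1 σ (x - θ) :=
          mul_le_mul_of_nonneg_right h1 hpos
      _ = 2 * x ^ 2 * gaussDens1 σ (x - θ) + 2 * ((x - θ) ^ 2 * gaussDens1 σ (x - θ)) := by ring
      _ ≤ 2 * x ^ 2 * C + 2 * (C * (2 * σ ^ 2)) :=
          add_le_add (mul_le_mul_of_nonneg_left (gd_le hσ _) (by positivity))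
            (mul_le_mul_of_nonneg_left (sq_gd_le hσ _) (by norm_num))
  -- positivity of f
  have hfpos : ∀ x, 0 < f x := by
    intro x
    rw [hf x]
    have hne : (Function.support fun θ => gaussDens1 σ (x - θ)) = Set.univ := by
      ext θ; simp [Function.support, (gd_pos hσ (x - θ)).ne']
    rw [integral_pos_iff_support_of_nonneg_ae (ae_of_all _ fun θ => (gd_pos hσ (x - θ)).le)
      (int0 x), hne]
    simp
  -- first derivative of f
  have key1 : ∀ x₀ : ℝ, HasDerivAt f (∫ θ, gd1 σ (x₀ - θ) ∂g) x₀ := by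
    intro x₀
    have hfe : f = fun x => ∫ θ, gaussDens1 σ (x - θ) ∂g := funext hf
    rw [hfe]
    refine (hasDerivAt_integral_of_dominated_loc_of_deriv_le (F := fun x θ => gaussDens1 σ (x - θ))
      (F' := fun x θ => gd1 σ (x - θ)) (bound := fun _ => C * (1 + 2 * σ ^ 2) / σ ^ 2)
      (Metric.ball_mem_nhds x₀ one_pos) ?_ (int0 x₀) ?_ ?_ (integrable_const _) ?_).2
    · exact Filter.Eventually.of_forall fun x =>
        ((gd_continuous σ).comp (by continuity)).aestronglyMeasurable
    · exact ((gd1_continuous σ).comp (by continuity)).aestronglyMeasurable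
    · exact ae_of_all _ fun θ x _ => gd1_bound hσ (x - θ)
    · refine ae_of_all _ fun θ x _ => ?_
      have h := (hasDerivAt_gd hσ (x - θ)).comp x ((hasDerivAt_id x).sub_const θ)
      simp at h; exact h
  -- second derivative
  have hderivf : deriv f = fun x => ∫ θ, gd1 σ (x - θ) ∂g := funext fun x => (key1 x).deriv
  have key2 : ∀ x₀ : ℝ, HasDerivAt (deriv f) (∫ θ, gd2 σ (x₀ - θ) ∂g) x₀ := by
    intro x₀
    rw [hderivf]
    refine (hasDerivAt_integral_of_dominated_loc_of_deriv_le (F := fun x θ => gd1 σ (x - θ))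
      (F' := fun x θ => gd2 σ (x - θ)) (bound := fun _ => 3 * C / σ ^ 2)
      (Metric.ball_mem_nhds x₀ one_pos) ?_ ?_ ?_ ?_ (integrable_const _) ?_).2
    · exact Filter.Eventually.of_forall fun x =>
        ((gd1_continuous σ).comp (by continuity)).aestronglyMeasurable
    · exact integrable_of_bdd ((gd1_continuous σ).comp (by continuity))
        (fun θ => gd1_bound hσ _) g
    · exact ((gd2_continuous σ).comp (by continuity)).aestronglyMeasurable
    · exact ae_of_all _ fun θ x _ => gd2_bound hσ (x - θ)
    · refine ae_of_all _ fun θ x _ => ?_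
      have h := (hasDerivAt_gd1 hσ (x - θ)).comp x ((hasDerivAt_id x).sub_const θ)
      simp at h; exact h
  have hdf : Differentiable ℝ f := fun x => (key1 x).differentiableAt
  have hdf' : Differentiable ℝ (deriv f) := fun x => (key2 x).differentiableAt
  -- log f derivatives
  have keyL1 : ∀ x : ℝ, HasDerivAt (fun x => Real.log (f x))
      ((∫ θ, gd1 σ (x - θ) ∂g) / f x) x := fun x => (key1 x).log (hfpos x).ne'
  have hderivL : (deriv fun x => Real.log (f x)) = fun x => (∫ θ, gd1 σ (x - θ) ∂g) / f x :=
    funext fun x => (keyL1 x).deriv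
  have keyL2 : ∀ x : ℝ, HasDerivAt (deriv fun x => Real.log (f x))
      (((∫ θ, gd2 σ (x - θ) ∂g) * f x - (∫ θ, gd1 σ (x - θ) ∂g) * (∫ θ, gd1 σ (x - θ) ∂g))
        / (f x) ^ 2) x := by
    intro x
    rw [hderivL]
    have h1 : HasDerivAt (fun x => ∫ θ, gd1 σ (x - θ) ∂g) (∫ θ, gd2 σ (x - θ) ∂g) x := by
      have := key2 x; rwa [hderivf] at this
    exact h1.div (key1 x) (hfpos x).ne'
  refine ⟨hfpos, hdf, hdf', fun x => (keyL1 x).differentiableAt,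
    fun x => (keyL2 x).differentiableAt, fun x => ?_⟩
  -- the final algebra
  set I0 : ℝ := ∫ θ, gaussDens1 σ (x - θ) ∂g with hI0
  set I1 : ℝ := ∫ θ, θ * gaussDens1 σ (x - θ) ∂g with hI1
  set I2 : ℝ := ∫ θ, θ ^ 2 * gaussDens1 σ (x - θ) ∂g with hI2
  have hF1 : (∫ θ, gd1 σ (x - θ) ∂g) = (1 / σ ^ 2) * I1 - (x / σ ^ 2) * I0 := by
    have he : (fun θ => gd1 σ (x - θ))
        = fun θ => (1 / σ ^ 2) * (θ * gaussDens1 σ (x - θ))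
          - (x / σ ^ 2) * gaussDens1 σ (x - θ) := by
      funext θ; unfold gd1; ring
    rw [he, integral_sub ((int1 x).const_mul _) ((int0 x).const_mul _),
      integral_const_mul, integral_const_mul]
  have hF2 : (∫ θ, gd2 σ (x - θ) ∂g)
      = (x ^ 2 / σ ^ 4 - 1 / σ ^ 2) * I0 - (2 * x / σ ^ 4) * I1 + (1 / σ ^ 4) * I2 := by
    have he : (fun θ => gd2 σ (x - θ))
        = fun θ => ((x ^ 2 / σ ^ 4 - 1 / σ ^ 2) * gaussDens1 σ (x - θ)
          - (2 * x / σ ^ 4) * (θ * gaussDens1 σ (x - θ)))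
          + (1 / σ ^ 4) * (θ ^ 2 * gaussDens1 σ (x - θ)) := by
      funext θ; unfold gd2; ring
    have hA : Integrable (fun θ => (x ^ 2 / σ ^ 4 - 1 / σ ^ 2) * gaussDens1 σ (x - θ)
        - 2 * x / σ ^ 4 * (θ * gaussDens1 σ (x - θ))) g :=
      ((int0 x).const_mul _).sub ((int1 x).const_mul _)
    have e1 : (∫ θ, gd2 σ (x - θ) ∂g)
        = (∫ θ, ((x ^ 2 / σ ^ 4 - 1 / σ ^ 2) * gaussDens1 σ (x - θ)
            - 2 * x / σ ^ 4 * (θ * gaussDens1 σ (x - θ))) ∂g)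
          + ∫ θ, 1 / σ ^ 4 * (θ ^ 2 * gaussDens1 σ (x - θ)) ∂g := by
      rw [he]; exact integral_add hA ((int2 x).const_mul _)
    have e2 : (∫ θ, ((x ^ 2 / σ ^ 4 - 1 / σ ^ 2) * gaussDens1 σ (x - θ)
          - 2 * x / σ ^ 4 * (θ * gaussDens1 σ (x - θ))) ∂g)
        = (∫ θ, (x ^ 2 / σ ^ 4 - 1 / σ ^ 2) * gaussDens1 σ (x - θ) ∂g)
          - ∫ θ, 2 * x / σ ^ 4 * (θ * gaussDens1 σ (x - θ)) ∂g :=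
      integral_sub ((int0 x).const_mul _) ((int1 x).const_mul _)
    rw [e1, e2, integral_const_mul, integral_const_mul, integral_const_mul]
  have hfx : f x = I0 := hf x
  have hd2 : deriv (deriv fun x => Real.log (f x)) x
      = ((∫ θ, gd2 σ (x - θ) ∂g) * f x - (∫ θ, gd1 σ (x - θ) ∂g) * (∫ θ, gd1 σ (x - θ) ∂g))
        / (f x) ^ 2 := (keyL2 x).deriv
  rw [hm x, hd2, hF1, hF2, hfx]
  have hI0pos : 0 < I0 := hfx ▸ hfpos x
  have hI0ne : I0 ≠ 0 := hI0pos.ne'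
  have hσne : σ ≠ 0 := hσ.ne'
  field_simp
  ring
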